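/- Let Ω₁,…,Ω_N (N ≥ 2) be nonempty bounded open subsets of ℝ^d (d ≥ 2) whose closures are pairwise disjoint, and let δ be the minimal distance between boundary points of distinct obstacles. Suppose i ≠ j, q₁ ∈ ∂Ω_i, q₂ ∈ ∂Ω_j and ‖q₁ − q₂‖ = δ. Then the open segment joining q₁ and q₂ lies entirely in the exterior region: for every s ∈ (0,1) the point (1 − s)·q₁ + s·q₂ does not belong to the closure of Ω = Ω₁ ∪ … ∪ Ω_N. -/

import Mathlib

/-! If a point `p` strictly inside the segment lay in `closure (Ω k)`, pick an endpoint `q` of the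
segment outside `closure (Ω k)` (the closures are disjoint, so one exists). The segment from `q` to
`p` crosses `frontier (Ω k)` at distance at most `‖p - q‖ < δ` from `q ∈ frontier (Ω i)` (or
`frontier (Ω j)`), contradicting the minimality of `δ`. -/

open Set

theorem IsPreconnected.inter_frontier_nonempty {X : Type*} [TopologicalSpace X] {s t : Set X}
    (hs : IsPreconnected s) (hst : (s ∩ t).Nonempty) (hs_t : (s \ t).Nonempty) :
    (s ∩ frontier t).Nonempty := by
  by_contra! h
  have hcover : s ⊆ interior t ∪ (closure t)ᶜ := fun x hx => by
    by_contra hx'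
    simp only [mem_union, mem_compl_iff, not_or, not_not] at hx'
    exact h.subset ⟨hx, hx'.2, hx'.1⟩
  obtain ⟨x, hxs, hxt⟩ := hst
  have hx_int : x ∈ interior t := (hcover hxs).resolve_right (not_not.2 (subset_closure hxt))
  have hs_int : s ⊆ interior t := hs.subset_left_of_subset_union isOpen_interior
    isClosed_closure.isOpen_compl (disjoint_compl_right.mono_right
      (compl_subset_compl.2 interior_subset_closure)) hcover ⟨x, hxs, hx_int⟩
  obtain ⟨z, hzs, hzt⟩ := hs_t
  exact hzt (interior_subset (hs_int hzs))

section NormedSpace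

variable {E : Type*} [NormedAddCommGroup E] [NormedSpace ℝ E]

theorem exists_mem_frontier_dist_le {t : Set E} {a p : E} (ha : a ∉ closure t)
    (hp : p ∈ closure t) : ∃ y ∈ frontier t, dist y a ≤ dist p a := by
  obtain ⟨y, hy_seg, hy⟩ := (convex_segment a p).isPreconnected.inter_frontier_nonempty
    ⟨p, right_mem_segment ℝ a p, hp⟩ ⟨a, left_mem_segment ℝ a p, ha⟩
  refine ⟨y, frontier_closure_subset hy, ?_⟩
  simpa only [dist_eq_norm] using norm_sub_le_of_mem_segment hy_seg

theorem dist_combo_left_lt {x y : E} (hxy : x ≠ y) {s : ℝ} (hs : s ∈ Ioo (0 : ℝ) 1) :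
    dist ((1 - s) • x + s • y) x < dist x y := by
  rw [← AffineMap.lineMap_apply_module, dist_lineMap_left, Real.norm_of_nonneg hs.1.le]
  exact mul_lt_of_lt_one_left (dist_pos.2 hxy) hs.2

theorem dist_combo_right_lt {x y : E} (hxy : x ≠ y) {s : ℝ} (hs : s ∈ Ioo (0 : ℝ) 1) :
    dist ((1 - s) • x + s • y) y < dist x y := by
  rw [← AffineMap.lineMap_apply_module, dist_lineMap_right,
    Real.norm_of_nonneg (sub_nonneg.2 hs.2.le)]
  exact mul_lt_of_lt_one_left (dist_pos.2 hxy) (sub_lt_self 1 hs.1)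

end NormedSpace

theorem stmt2_general (d N : ℕ)
    (Ω : Fin N → Set (EuclideanSpace ℝ (Fin d)))
    (hdisj : ∀ i j, i ≠ j → Disjoint (closure (Ω i)) (closure (Ω j)))
    (δ : ℝ)
    (hδmin : ∀ i j, i ≠ j → ∀ x ∈ frontier (Ω i), ∀ y ∈ frontier (Ω j), δ ≤ ‖x - y‖)
    (i j : Fin N) (hij : i ≠ j)
    (q₁ q₂ : EuclideanSpace ℝ (Fin d))
    (hq₁ : q₁ ∈ frontier (Ω i)) (hq₂ : q₂ ∈ frontier (Ω j))
    (hq : ‖q₁ - q₂‖ = δ) :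
    ∀ s ∈ Set.Ioo (0 : ℝ) 1, (1 - s) • q₁ + s • q₂ ∉ closure (⋃ k, Ω k) := by
  intro s hs hp
  rw [closure_iUnion_of_finite, mem_iUnion] at hp
  obtain ⟨k, hk⟩ := hp
  rw [← dist_eq_norm] at hq
  have hq₁₂ : q₁ ≠ q₂ := (hdisj i j hij).ne_of_mem hq₁.1 hq₂.1
  by_cases hki : k = i
  · subst hki
    obtain ⟨y, hy, hy_le⟩ := exists_mem_frontier_dist_le
      (disjoint_right.1 (hdisj k j hij) hq₂.1) hk
    have := hδmin k j hij y hy q₂ hq₂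
    rw [← dist_eq_norm] at this
    linarith [dist_combo_right_lt hq₁₂ hs]
  · obtain ⟨y, hy, hy_le⟩ := exists_mem_frontier_dist_le
      (disjoint_left.1 (hdisj i k (Ne.symm hki)) hq₁.1) hk
    have := hδmin i k (Ne.symm hki) q₁ hq₁ y hy
    rw [← dist_eq_norm, dist_comm] at this
    linarith [dist_combo_left_lt hq₁₂ hs]

/-- A minimizing segment between two distinct obstacles lies (except for its
endpoints) entirely outside the closure of the union of the obstacles. -/
theorem stmt2 (d N : ℕ) (hd : 2 ≤ d) (hN : 2 ≤ N)
    (Ω : Fin N → Set (EuclideanSpace ℝ (Fin d)))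
    (hne : ∀ i, (Ω i).Nonempty)
    (hbdd : ∀ i, Bornology.IsBounded (Ω i))
    (hopen : ∀ i, IsOpen (Ω i))
    (hdisj : ∀ i j, i ≠ j → Disjoint (closure (Ω i)) (closure (Ω j)))
    (δ : ℝ)
    (hδmin : ∀ i j, i ≠ j → ∀ x ∈ frontier (Ω i), ∀ y ∈ frontier (Ω j), δ ≤ ‖x - y‖)
    (i j : Fin N) (hij : i ≠ j)
    (q₁ q₂ : EuclideanSpace ℝ (Fin d))
    (hq₁ : q₁ ∈ frontier (Ω i)) (hq₂ : q₂ ∈ frontier (Ω j))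
    (hq : ‖q₁ - q₂‖ = δ) :
    ∀ s ∈ Set.Ioo (0 : ℝ) 1, (1 - s) • q₁ + s • q₂ ∉ closure (⋃ k, Ω k) :=
  stmt2_general d N Ω hdisj δ hδmin i j hij q₁ q₂ hq₁ hq₂ hq
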